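/- Let d ≥ 2, 1 ≤ k ≤ d, and let y_1,…,y_n ∈ ℝ^d satisfy condition (B1). Set L := {β ∈ ℝ^n : β_1 y_1 + ⋯ + β_n y_n = 0}. Then for all 1 ≤ l_1 < ⋯ < l_{n−d+k} ≤ n, ε ∈ {−1,+1}^n and σ ∈ S_n, one has F^B_{ε,σ}(l_1,…,l_{n−d+k}) = {0} if and only if C^B_{ε,σ}(l_1,…,l_{n−d+k}) ∩ L^⊥ = {0}. -/

import Mathlib

open scoped RealInnerProductSpace BigOperators Pointwise

noncomputable section

/-- The unsigned Stirling numbers of the first kind `⎡n,k⎤`, defined as the coefficients of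
the polynomial identity `t (t+1) ⋯ (t+n-1) = ∑ k, ⎡n,k⎤ t^k`. -/
def stirlingFirst (n k : ℕ) : ℕ :=
  (∏ i ∈ Finset.range n, (Polynomial.X + Polynomial.C i : Polynomial ℕ)).coeff k

/-- The B-analogues `B[n,k]` of the Stirling numbers of the first kind, defined as the
coefficients of `(t+1)(t+3)⋯(t+2n-1) = ∑ k, B[n,k] t^k`. -/
def stirlingFirstB (n k : ℕ) : ℕ :=
  (∏ i ∈ Finset.range n, (Polynomial.X + Polynomial.C (2 * i + 1) : Polynomial ℕ)).coeff k

/-- `D^A(n,d) = 2(⎡n, n-d+1⎤ + ⎡n, n-d+3⎤ + ⋯)`. -/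
def DA (n d : ℕ) : ℕ := 2 * ∑ j ∈ Finset.range d, stirlingFirst n (n - d + 1 + 2 * j)

/-- `D^B(n,d) = 2(B[n, n-d+1] + B[n, n-d+3] + ⋯)`. -/
def DB (n d : ℕ) : ℕ := 2 * ∑ j ∈ Finset.range d, stirlingFirstB n (n - d + 1 + 2 * j)

/-- Stirling numbers of the second kind: the number of partitions of `{1,…,n}` into `k`
non-empty subsets. -/
def stirlingSecond (n k : ℕ) : ℕ :=
  Set.ncard {P : Finset (Finset (Fin n)) |
    P.card = k ∧ (∀ s ∈ P, s.Nonempty) ∧ ∀ i : Fin n, ∃! s, s ∈ P ∧ i ∈ s}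

/-- B-analogues of the Stirling numbers of the second kind:
`S_B(n,k) = ∑_{r=k}^n C(n,r) S(r,k) 2^{r-k}`. -/
def stirlingSecondB (n k : ℕ) : ℕ :=
  ∑ r ∈ Finset.Icc k n, Nat.choose n r * stirlingSecond r k * 2 ^ (r - k)

/-- The `i`-th of the `n-1` difference vectors `y_{σ(i)} - y_{σ(i+1)}` (0-indexed). -/
def diffA (d n : ℕ) (y : Fin n → EuclideanSpace ℝ (Fin d)) (σ : Equiv.Perm (Fin n))
    (i : Fin (n - 1)) : EuclideanSpace ℝ (Fin d) :=
  y (σ ⟨i.val, by have := i.isLt; omega⟩) - y (σ ⟨i.val + 1, by have := i.isLt; omega⟩)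

/-- Condition (A1): `n ≥ d+1` and for every permutation `σ`, any `d` of the vectors
`y_{σ(1)}-y_{σ(2)}, …, y_{σ(n-1)}-y_{σ(n)}` are linearly independent. -/
def CondA1 (d n : ℕ) (y : Fin n → EuclideanSpace ℝ (Fin d)) : Prop :=
  d + 1 ≤ n ∧
    ∀ σ : Equiv.Perm (Fin n), ∀ s : Finset (Fin (n - 1)), s.card = d →
      LinearIndependent ℝ (fun i : s => diffA d n y σ i.1)

/-- A vector of signs `ε ∈ {±1}^n`. -/
def IsSignVec {n : ℕ} (ε : Fin n → ℝ) : Prop := ∀ i, ε i = 1 ∨ ε i = -1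

/-- The `i`-th of the `n` vectors `ε_1 y_{σ(1)} - ε_2 y_{σ(2)}, …,
`ε_{n-1} y_{σ(n-1)} - ε_n y_{σ(n)}, ε_n y_{σ(n)}` (0-indexed). -/
def diffB (d n : ℕ) (y : Fin n → EuclideanSpace ℝ (Fin d)) (ε : Fin n → ℝ)
    (σ : Equiv.Perm (Fin n)) (i : Fin n) : EuclideanSpace ℝ (Fin d) :=
  if h : i.val + 1 < n then
    ε i • y (σ i) - ε ⟨i.val + 1, h⟩ • y (σ ⟨i.val + 1, h⟩)
  else ε i • y (σ i)

/-- Condition (B1): `n ≥ d` and for every sign vector `ε` and permutation `σ`, any `d` of the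
vectors `ε_1 y_{σ(1)}-ε_2 y_{σ(2)}, …, ε_{n-1}y_{σ(n-1)}-ε_n y_{σ(n)}, ε_n y_{σ(n)}` are
linearly independent. -/
def CondB1 (d n : ℕ) (y : Fin n → EuclideanSpace ℝ (Fin d)) : Prop :=
  d ≤ n ∧
    ∀ ε : Fin n → ℝ, IsSignVec ε → ∀ σ : Equiv.Perm (Fin n),
      ∀ s : Finset (Fin n), s.card = d →
        LinearIndependent ℝ (fun i : s => diffB d n y ε σ i.1)

/-- The cone `D^A_σ = {v : ⟨v,y_{σ(1)}⟩ ≤ ⋯ ≤ ⟨v,y_{σ(n)}⟩}`. -/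
def ConeA (d n : ℕ) (y : Fin n → EuclideanSpace ℝ (Fin d)) (σ : Equiv.Perm (Fin n)) :
    Set (EuclideanSpace ℝ (Fin d)) :=
  {v | Monotone fun i : Fin n => (⟪v, y (σ i)⟫)}

/-- The Weyl tessellation of type `A_{n-1}`: all cones `D^A_σ` different from `{0}`. -/
def WeylA (d n : ℕ) (y : Fin n → EuclideanSpace ℝ (Fin d)) :
    Set (Set (EuclideanSpace ℝ (Fin d))) :=
  {C | (∃ σ, C = ConeA d n y σ) ∧ C ≠ {0}}

/-- The cone `D^B_{ε,σ} = {v : ε_1⟨v,y_{σ(1)}⟩ ≤ ⋯ ≤ ε_n⟨v,y_{σ(n)}⟩ ≤ 0}`. -/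
def ConeB (d n : ℕ) (y : Fin n → EuclideanSpace ℝ (Fin d)) (ε : Fin n → ℝ)
    (σ : Equiv.Perm (Fin n)) : Set (EuclideanSpace ℝ (Fin d)) :=
  {v | (Monotone fun i : Fin n => ε i * ⟪v, y (σ i)⟫) ∧
    ∀ i : Fin n, ε i * ⟪v, y (σ i)⟫ ≤ 0}

/-- The Weyl tessellation of type `B_n`: all cones `D^B_{ε,σ}` different from `{0}`. -/
def WeylB (d n : ℕ) (y : Fin n → EuclideanSpace ℝ (Fin d)) :
    Set (Set (EuclideanSpace ℝ (Fin d))) :=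
  {C | (∃ ε σ, IsSignVec ε ∧ C = ConeB d n y ε σ) ∧ C ≠ {0}}

/-- The cone `F^A_σ(l_1,…,l_m)` (with the `l_j` being 1-indexed): within the chain
`⟨v,y_{σ(1)}⟩ ≤ ⋯ ≤ ⟨v,y_{σ(n)}⟩` the inequality at a 1-indexed position `i ∉ {l_1,…,l_m}`
is replaced by an equality. -/
def FaceA (d n : ℕ) (y : Fin n → EuclideanSpace ℝ (Fin d)) (σ : Equiv.Perm (Fin n))
    (m : ℕ) (l : Fin m → ℕ) : Set (EuclideanSpace ℝ (Fin d)) :=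
  {v | (Monotone fun i : Fin n => (⟪v, y (σ i)⟫)) ∧
    ∀ (p : ℕ) (hp : p + 1 < n), (∀ j, l j ≠ p + 1) →
      ⟪v, y (σ ⟨p, by omega⟩)⟫ = ⟪v, y (σ ⟨p + 1, hp⟩)⟫}

/-- Admissible break positions for type `A`: `1 ≤ l_1 < ⋯ < l_m ≤ n-1`. -/
def ValidA (n m : ℕ) (l : Fin m → ℕ) : Prop :=
  StrictMono l ∧ ∀ j, 1 ≤ l j ∧ l j ≤ n - 1

/-- The set `𝓕^A_k(y_1,…,y_n)` of `k`-faces of the Weyl tessellation of type `A_{n-1}`: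
all nonzero cones of the form `F^A_σ(l_1,…,l_{n-d+k-1})`. -/
def FacesA (d n k : ℕ) (y : Fin n → EuclideanSpace ℝ (Fin d)) :
    Set (Set (EuclideanSpace ℝ (Fin d))) :=
  {F | (∃ (σ : Equiv.Perm (Fin n)) (l : Fin (n - d + k - 1) → ℕ),
      ValidA n (n - d + k - 1) l ∧ F = FaceA d n y σ (n - d + k - 1) l) ∧ F ≠ {0}}

/-- The cone `F^B_{ε,σ}(l_1,…,l_m)` (with the `l_j` being 1-indexed): within the chain
`ε_1⟨v,y_{σ(1)}⟩ ≤ ⋯ ≤ ε_n⟨v,y_{σ(n)}⟩ ≤ 0` the inequality at a 1-indexed position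
`i ∉ {l_1,…,l_m}` is replaced by an equality; in particular all `⟨v,y_{σ(i)}⟩` with
`i > l_m` vanish. -/
def FaceB (d n : ℕ) (y : Fin n → EuclideanSpace ℝ (Fin d)) (ε : Fin n → ℝ)
    (σ : Equiv.Perm (Fin n)) (m : ℕ) (l : Fin m → ℕ) : Set (EuclideanSpace ℝ (Fin d)) :=
  {v | (Monotone fun i : Fin n => ε i * ⟪v, y (σ i)⟫) ∧
    (∀ i : Fin n, ε i * ⟪v, y (σ i)⟫ ≤ 0) ∧
    (∀ (p : ℕ) (hp : p + 1 < n), (∀ j, l j ≠ p + 1) →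
      ε ⟨p, by omega⟩ * ⟪v, y (σ ⟨p, by omega⟩)⟫ =
        ε ⟨p + 1, hp⟩ * ⟪v, y (σ ⟨p + 1, hp⟩)⟫) ∧
    (∀ (p : ℕ) (hp : p < n), (∀ j, l j ≤ p) → ⟪v, y (σ ⟨p, hp⟩)⟫ = 0)}

/-- Admissible break positions for type `B`: `1 ≤ l_1 < ⋯ < l_m ≤ n`. -/
def ValidB (n m : ℕ) (l : Fin m → ℕ) : Prop :=
  StrictMono l ∧ ∀ j, 1 ≤ l j ∧ l j ≤ n

/-- The set `𝓕^B_k(y_1,…,y_n)` of `k`-faces of the Weyl tessellation of type `B_n`: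
all nonzero cones of the form `F^B_{ε,σ}(l_1,…,l_{n-d+k})`. -/
def FacesB (d n k : ℕ) (y : Fin n → EuclideanSpace ℝ (Fin d)) :
    Set (Set (EuclideanSpace ℝ (Fin d))) :=
  {F | (∃ (ε : Fin n → ℝ) (σ : Equiv.Perm (Fin n)) (l : Fin (n - d + k) → ℕ),
      IsSignVec ε ∧ ValidB n (n - d + k) l ∧ F = FaceB d n y ε σ (n - d + k) l) ∧ F ≠ {0}}

/-- The multiplicity `l_1!(l_2-l_1)!⋯(l_m-l_{m-1})!(n-l_m)!`. -/
def MultA (n m : ℕ) (l : Fin m → ℕ) : ℕ :=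
  (∏ j : Fin m, Nat.factorial
      (l j - if _ : j.val = 0 then 0 else l ⟨j.val - 1, by have := j.isLt; omega⟩)) *
    (if h : 0 < m then Nat.factorial (n - l ⟨m - 1, by omega⟩) else Nat.factorial n)

/-- The multiplicity `l_1!(l_2-l_1)!⋯(l_m-l_{m-1})!(n-l_m)! 2^{n-l_m}`. -/
def MultB (n m : ℕ) (l : Fin m → ℕ) : ℕ :=
  (∏ j : Fin m, Nat.factorial
      (l j - if _ : j.val = 0 then 0 else l ⟨j.val - 1, by have := j.isLt; omega⟩)) *
    (if h : 0 < m then Nat.factorial (n - l ⟨m - 1, by omega⟩) * 2 ^ (n - l ⟨m - 1, by omega⟩)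
     else Nat.factorial n * 2 ^ n)

/-- The face `C^A_σ(l_1,…,l_m)` of a Weyl chamber of type `A_{n-1}` in `ℝ^n`. -/
def ChamberFaceA (n : ℕ) (σ : Equiv.Perm (Fin n)) (m : ℕ) (l : Fin m → ℕ) :
    Set (EuclideanSpace ℝ (Fin n)) :=
  {β | (Monotone fun i : Fin n => β (σ i)) ∧
    ∀ (p : ℕ) (hp : p + 1 < n), (∀ j, l j ≠ p + 1) → β (σ ⟨p, by omega⟩) = β (σ ⟨p + 1, hp⟩)}

/-- The face `C^B_{ε,σ}(l_1,…,l_m)` of a Weyl chamber of type `B_n` in `ℝ^n`. -/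
def ChamberFaceB (n : ℕ) (ε : Fin n → ℝ) (σ : Equiv.Perm (Fin n)) (m : ℕ) (l : Fin m → ℕ) :
    Set (EuclideanSpace ℝ (Fin n)) :=
  {β | (Monotone fun i : Fin n => ε i * β (σ i)) ∧
    (∀ i : Fin n, ε i * β (σ i) ≤ 0) ∧
    (∀ (p : ℕ) (hp : p + 1 < n), (∀ j, l j ≠ p + 1) →
      ε ⟨p, by omega⟩ * β (σ ⟨p, by omega⟩) = ε ⟨p + 1, hp⟩ * β (σ ⟨p + 1, hp⟩)) ∧
    (∀ (p : ℕ) (hp : p < n), (∀ j, l j ≤ p) → β (σ ⟨p, hp⟩) = 0)}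

/-- The linear subspace `L = {β ∈ ℝ^n : β_1 y_1 + ⋯ + β_n y_n = 0}`. -/
def Lspace (d n : ℕ) (y : Fin n → EuclideanSpace ℝ (Fin d)) :
    Submodule ℝ (EuclideanSpace ℝ (Fin n)) where
  carrier := {β | ∑ i, β i • y i = 0}
  add_mem' := by
    intro a b ha hb
    simp only [Set.mem_setOf_eq] at *
    have h : ∀ i ∈ Finset.univ, (a + b) i • y i = a i • y i + b i • y i := by
      intro i _
      rw [PiLp.add_apply, add_smul]
    rw [Finset.sum_congr rfl h, Finset.sum_add_distrib, ha, hb, add_zero]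
  zero_mem' := by
    simp only [Set.mem_setOf_eq]
    refine Finset.sum_eq_zero fun i _ => ?_
    rw [PiLp.zero_apply, zero_smul]
  smul_mem' := by
    intro c a ha
    simp only [Set.mem_setOf_eq] at *
    have h : ∀ i ∈ Finset.univ, (c • a) i • y i = c • (a i • y i) := by
      intro i _
      rw [PiLp.smul_apply, smul_smul, smul_eq_mul]
    rw [Finset.sum_congr rfl h, ← Finset.smul_sum, ha, smul_zero]

/-- The hyperplane `{β ∈ ℝ^N : β_i = β_j}`. -/
def hypEq (N : ℕ) (i j : Fin N) : Submodule ℝ (EuclideanSpace ℝ (Fin N)) where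
  carrier := {β | β i = β j}
  add_mem' := by
    intro a b ha hb
    simp only [Set.mem_setOf_eq, PiLp.add_apply] at *
    rw [ha, hb]
  zero_mem' := by simp [Set.mem_setOf_eq]
  smul_mem' := by
    intro c a ha
    simp only [Set.mem_setOf_eq, PiLp.smul_apply] at *
    rw [ha]

/-- The hyperplane `{β ∈ ℝ^N : β_i = -β_j}`. -/
def hypOpp (N : ℕ) (i j : Fin N) : Submodule ℝ (EuclideanSpace ℝ (Fin N)) where
  carrier := {β | β i = -β j}
  add_mem' := by
    intro a b ha hb
    simp only [Set.mem_setOf_eq, PiLp.add_apply] at *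
    rw [ha, hb, neg_add]
  zero_mem' := by simp [Set.mem_setOf_eq]
  smul_mem' := by
    intro c a ha
    simp only [Set.mem_setOf_eq, PiLp.smul_apply] at *
    rw [ha, smul_neg]

/-- The hyperplane `{β ∈ ℝ^N : β_i = 0}`. -/
def hypZero (N : ℕ) (i : Fin N) : Submodule ℝ (EuclideanSpace ℝ (Fin N)) where
  carrier := {β | β i = 0}
  add_mem' := by
    intro a b ha hb
    simp only [Set.mem_setOf_eq, PiLp.add_apply] at *
    rw [ha, hb, add_zero]
  zero_mem' := by simp [Set.mem_setOf_eq]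
  smul_mem' := by
    intro c a ha
    simp only [Set.mem_setOf_eq, PiLp.smul_apply] at *
    rw [ha, smul_zero]

/-- The reflection arrangement `𝒜(A_{N-1})` in `ℝ^N`. -/
def ArrA (N : ℕ) : Set (Submodule ℝ (EuclideanSpace ℝ (Fin N))) :=
  {H | ∃ i j : Fin N, i < j ∧ H = hypEq N i j}

/-- The reflection arrangement `𝒜(B_N)` in `ℝ^N`. -/
def ArrB (N : ℕ) : Set (Submodule ℝ (EuclideanSpace ℝ (Fin N))) :=
  {H | (∃ i j : Fin N, i < j ∧ H = hypEq N i j) ∨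
    (∃ i j : Fin N, i < j ∧ H = hypOpp N i j) ∨ ∃ i : Fin N, H = hypZero N i}

/-- Two linear subspaces `U`, `W` of `ℝ^N` are in general position if
`dim (U ∩ W) = max {0, dim U + dim W - N}`. -/
def InGenPos (N : ℕ) (U W : Submodule ℝ (EuclideanSpace ℝ (Fin N))) : Prop :=
  Module.finrank ℝ ↥(U ⊓ W) = Module.finrank ℝ ↥U + Module.finrank ℝ ↥W - N

/-- A linear subspace `U` is in general position with respect to a hyperplane
arrangement `A` if it is in general position with respect to `⋂_{H ∈ B} H` for
every subset `B ⊆ A`. -/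
def InGenPosArr (N : ℕ) (U : Submodule ℝ (EuclideanSpace ℝ (Fin N)))
    (A : Set (Submodule ℝ (EuclideanSpace ℝ (Fin N)))) : Prop :=
  ∀ B ⊆ A, InGenPos N U (sInf B)

/-- The polyhedral cone `{v : ⟨x_1,v⟩ ≤ 0, …, ⟨x_m,v⟩ ≤ 0}`. -/
def PolyCone (d m : ℕ) (x : Fin m → EuclideanSpace ℝ (Fin d)) :
    Set (EuclideanSpace ℝ (Fin d)) :=
  {v | ∀ i, ⟪x i, v⟫ ≤ 0}

/-- The dual cone `C° = {v : ⟨x,v⟩ ≤ 0 ∀ x ∈ C}`. -/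
def DualCone (d : ℕ) (C : Set (EuclideanSpace ℝ (Fin d))) :
    Set (EuclideanSpace ℝ (Fin d)) :=
  {v | ∀ w ∈ C, ⟪w, v⟫ ≤ 0}

/-- The face of `D^B_{ε,σ}` obtained by replacing the inequalities at the (0-indexed)
positions in `E` by equalities. -/
def SubfaceB (d n : ℕ) (y : Fin n → EuclideanSpace ℝ (Fin d)) (ε : Fin n → ℝ)
    (σ : Equiv.Perm (Fin n)) (E : Set (Fin n)) : Set (EuclideanSpace ℝ (Fin d)) :=
  {v | v ∈ ConeB d n y ε σ ∧ ∀ i ∈ E,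
    if h : (i : ℕ) + 1 < n then
      ε i * ⟪v, y (σ i)⟫ = ε ⟨(i : ℕ) + 1, h⟩ * ⟪v, y (σ ⟨(i : ℕ) + 1, h⟩)⟫
    else ε i * ⟪v, y (σ i)⟫ = 0}

end

/- The face `F^B` is the preimage of the chamber face `C^B` under the linear map
`v ↦ (⟨v, y_i⟩)_i`, whose range is `L^⊥` by duality. Condition (B1) makes the `y_i` span `ℝ^d`,
so this map is injective, and an injective map pulls a set back to `{0}` exactly when the set
meets its range in `{0}`. -/

theorem Function.Injective.preimage_eq_singleton_iff {α β : Type*} {f : α → β}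
    (hf : Function.Injective f) {s : Set β} {a : α} :
    f ⁻¹' s = {a} ↔ s ∩ Set.range f = {f a} := by
  rw [← Set.image_preimage_eq_inter_range, ← Set.image_singleton, hf.image_injective.eq_iff]

section InnerCoords

variable {ι E : Type*} [NormedAddCommGroup E] [InnerProductSpace ℝ E]

def innerCoords (y : ι → E) : E →ₗ[ℝ] EuclideanSpace ℝ ι where
  toFun v := WithLp.toLp 2 fun i => ⟪v, y i⟫
  map_add' a b := by ext i; simp [inner_add_left]
  map_smul' c a := by ext i; simp [real_inner_smul_left]

lemma inner_innerCoords [Fintype ι] (y : ι → E) (v : E) (β : EuclideanSpace ℝ ι) :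
    ⟪innerCoords y v, β⟫ = ⟪v, ∑ i, β i • y i⟫ := by
  simp [innerCoords, PiLp.inner_apply, inner_sum, real_inner_smul_right, mul_comm]

lemma innerCoords_injective {y : ι → E} (hy : Submodule.span ℝ (Set.range y) = ⊤) :
    Function.Injective (innerCoords y) := by
  rw [← LinearMap.ker_eq_bot, eq_bot_iff]
  intro v hv
  have hspan : Submodule.span ℝ (Set.range y) ≤ LinearMap.ker (innerₗ E v) :=
    Submodule.span_le.2 <| Set.range_subset_iff.2 fun i => congr_fun (congrArg WithLp.ofLp hv) i
  exact inner_self_eq_zero.1 (hspan (hy ▸ Submodule.mem_top))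

end InnerCoords

section TypeB

variable {d n : ℕ} {y : Fin n → EuclideanSpace ℝ (Fin d)}

lemma Lspace_eq_orthogonal_range_innerCoords :
    Lspace d n y = (LinearMap.range (innerCoords y))ᗮ := by
  ext β
  simp only [Submodule.mem_orthogonal, LinearMap.mem_range, forall_exists_index,
    forall_apply_eq_imp_iff, inner_innerCoords]
  exact ⟨fun hβ v => by rw [show ∑ i, β i • y i = 0 from hβ, inner_zero_right],
    fun h => inner_self_eq_zero.1 (h _)⟩

lemma orthogonal_Lspace : (Lspace d n y)ᗮ = LinearMap.range (innerCoords y) := by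
  rw [Lspace_eq_orthogonal_range_innerCoords, Submodule.orthogonal_orthogonal]

lemma diffB_mem_span_range (ε : Fin n → ℝ) (σ : Equiv.Perm (Fin n)) (i : Fin n) :
    diffB d n y ε σ i ∈ Submodule.span ℝ (Set.range y) := by
  have hy : ∀ c j, c • y j ∈ Submodule.span ℝ (Set.range y) :=
    fun c j => Submodule.smul_mem _ c (Submodule.subset_span ⟨j, rfl⟩)
  unfold diffB
  split
  · exact sub_mem (hy _ _) (hy _ _)
  · exact hy _ _

lemma CondB1.span_range_eq_top (hy : CondB1 d n y) : Submodule.span ℝ (Set.range y) = ⊤ := by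
  obtain ⟨s, -, hs⟩ := Finset.exists_subset_card_eq
    (show d ≤ (Finset.univ : Finset (Fin n)).card by simpa using hy.1)
  have hli := hy.2 1 (fun _ => Or.inl rfl) 1 s hs
  refine eq_top_iff.2 <| (hli.span_eq_top_of_card_eq_finrank' (by simp [hs])).ge.trans <|
    Submodule.span_le.2 ?_
  rintro _ ⟨i, rfl⟩
  exact diffB_mem_span_range 1 1 i.1

lemma FaceB_eq_preimage_ChamberFaceB (ε : Fin n → ℝ) (σ : Equiv.Perm (Fin n)) (m : ℕ)
    (l : Fin m → ℕ) : FaceB d n y ε σ m l = innerCoords y ⁻¹' ChamberFaceB n ε σ m l :=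
  rfl

end TypeB

theorem face_zero_iff_chamber_face_B_general (d n k : ℕ)
    (y : Fin n → EuclideanSpace ℝ (Fin d)) (hy : CondB1 d n y)
    (ε : Fin n → ℝ) (σ : Equiv.Perm (Fin n))
    (l : Fin (n - d + k) → ℕ) :
    FaceB d n y ε σ (n - d + k) l = {0} ↔
      ChamberFaceB n ε σ (n - d + k) l ∩
        ((Lspace d n y)ᗮ : Set (EuclideanSpace ℝ (Fin n))) = {0} := by
  rw [FaceB_eq_preimage_ChamberFaceB, orthogonal_Lspace, LinearMap.coe_range,
    (innerCoords_injective hy.span_range_eq_top).preimage_eq_singleton_iff, map_zero]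

/-- Lemma 2.9: a face `F^B_{ε,σ}(l_1,…,l_{n-d+k})` of the Weyl tessellation of type `B_n`
is `{0}` if and only if the corresponding face `C^B_{ε,σ}(l_1,…,l_{n-d+k})` of the Weyl
chambers of type `B_n` intersects `L^⊥` trivially. -/
theorem face_zero_iff_chamber_face_B (d n k : ℕ) (hd : 2 ≤ d) (hk : 1 ≤ k) (hkd : k ≤ d)
    (y : Fin n → EuclideanSpace ℝ (Fin d)) (hy : CondB1 d n y)
    (ε : Fin n → ℝ) (σ : Equiv.Perm (Fin n)) (hε : IsSignVec ε)
    (l : Fin (n - d + k) → ℕ) (hl : ValidB n (n - d + k) l) :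
    FaceB d n y ε σ (n - d + k) l = {0} ↔
      ChamberFaceB n ε σ (n - d + k) l ∩
        ((Lspace d n y)ᗮ : Set (EuclideanSpace ℝ (Fin n))) = {0} :=
  face_zero_iff_chamber_face_B_general d n k y hy ε σ l
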